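/- arXiv:2010.00566 — 5 statements merged into one kernel-verified Lean document; each statement's English description precedes it below -/
import Mathlib

section
/- If X is uniform on [0,2] and f is the payoff function equal to 1 on intervals [2k, 2k+1] for integers k and 0 elsewhere, then sup_a E f(a + X) = 1/2 while sup_a E f(a + (3/2)X) = 2/3; in particular g_{X,f} is not decreasing. -/
/-! Since `d X` is uniform on `[0, 2d]`, `E f(a + d X)` is the average of `f` over `[a, a + 2d]`.
For `d = 1` the window is a full period of `f`, so the average is `1/2` whatever `a` is. For
`d = 3/2` the window is a full period plus a unit interval, so `f` integrates to at most `2` over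
it, with equality at `a = 0`; hence the supremum is `2/3 > 1/2`. -/

open MeasureTheory Set

theorem integral_comp_affine_of_map_eq_uniform {Ω : Type*} [MeasurableSpace Ω] {P : Measure Ω}
    {X : Ω → ℝ} (hX : Measurable X) {c : ℝ} (hc : 0 < c)
    (hunif : P.map X = (ENNReal.ofReal c)⁻¹ • volume.restrict (Icc 0 c))
    {f : ℝ → ℝ} (hf : Measurable f) (a : ℝ) {d : ℝ} (hd : d ≠ 0) :
    ∫ ω, f (a + d * X ω) ∂P = (c * d)⁻¹ * ∫ y in a..a + c * d, f y := by
  have hfa : Measurable fun x => f (a + d * x) := by fun_prop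
  rw [← integral_map hX.aemeasurable hfa.aestronglyMeasurable, hunif, integral_smul_measure,
    integral_Icc_eq_integral_Ioc, ← intervalIntegral.integral_of_le hc.le]
  simp_rw [add_comm a]
  rw [intervalIntegral.integral_comp_mul_add f hd, ENNReal.toReal_inv,
    ENNReal.toReal_ofReal hc.le, smul_eq_mul, smul_eq_mul, mul_zero, zero_add, mul_comm d c,
    mul_inv, mul_assoc]

def evenBlocks : Set ℝ := {x : ℝ | ∃ k : ℤ, (2 * k : ℝ) ≤ x ∧ x ≤ 2 * k + 1}

theorem evenBlocks_eq_iUnion : evenBlocks = ⋃ k : ℤ, Icc (2 * k : ℝ) (2 * k + 1) := by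
  ext x
  simp [evenBlocks]

theorem measurableSet_evenBlocks : MeasurableSet evenBlocks := by
  rw [evenBlocks_eq_iUnion]
  exact .iUnion fun _ => measurableSet_Icc

theorem add_two_mem_evenBlocks_iff {x : ℝ} : x + 2 ∈ evenBlocks ↔ x ∈ evenBlocks := by
  constructor
  · rintro ⟨k, h₁, h₂⟩
    exact ⟨k - 1, by push_cast; linarith, by push_cast; linarith⟩
  · rintro ⟨k, h₁, h₂⟩
    exact ⟨k + 1, by push_cast; linarith, by push_cast; linarith⟩

theorem periodic_indicator_evenBlocks :
    Function.Periodic (evenBlocks.indicator (1 : ℝ → ℝ)) 2 :=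
  fun _ => indicator_eq_indicator add_two_mem_evenBlocks_iff rfl

theorem Icc_zero_one_subset_evenBlocks : Icc (0 : ℝ) 1 ⊆ evenBlocks :=
  fun x hx => ⟨0, by simpa using hx.1, by simpa using hx.2⟩

theorem disjoint_Ioo_one_two_evenBlocks : Disjoint (Ioo (1 : ℝ) 2) evenBlocks := by
  refine disjoint_left.2 fun x hx ⟨k, h₁, h₂⟩ => ?_
  have hk : k < 1 := by exact_mod_cast (by linarith [hx.2] : (k : ℝ) < 1)
  have hk' : (k : ℝ) ≤ 0 := by exact_mod_cast Int.lt_add_one_iff.1 hk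
  linarith [hx.1]

theorem intervalIntegrable_indicator_evenBlocks (a b : ℝ) :
    IntervalIntegrable (evenBlocks.indicator (1 : ℝ → ℝ)) volume a b :=
  (((locallyIntegrable_const (1 : ℝ)).indicator measurableSet_evenBlocks).integrableOn_isCompact
    isCompact_uIcc).intervalIntegrable

theorem integral_indicator_evenBlocks_zero_one :
    ∫ x in (0 : ℝ)..1, evenBlocks.indicator (1 : ℝ → ℝ) x = 1 := by
  rw [intervalIntegral.integral_congr (g := fun _ => 1), intervalIntegral.integral_const]
  · norm_num
  · intro x hx
    rw [uIcc_of_le zero_le_one] at hx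
    exact indicator_of_mem (Icc_zero_one_subset_evenBlocks hx) _

theorem integral_indicator_evenBlocks_one_two :
    ∫ x in (1 : ℝ)..2, evenBlocks.indicator (1 : ℝ → ℝ) x = 0 := by
  rw [intervalIntegral.integral_of_le one_le_two, integral_Ioc_eq_integral_Ioo]
  exact setIntegral_eq_zero_of_forall_eq_zero fun x hx =>
    indicator_of_notMem (disjoint_left.1 disjoint_Ioo_one_two_evenBlocks hx) _

theorem integral_indicator_evenBlocks_add_two (a : ℝ) :
    ∫ x in a..a + 2, evenBlocks.indicator (1 : ℝ → ℝ) x = 1 := by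
  rw [periodic_indicator_evenBlocks.intervalIntegral_add_eq a 0, zero_add,
    ← intervalIntegral.integral_add_adjacent_intervals
      (intervalIntegrable_indicator_evenBlocks 0 1) (intervalIntegrable_indicator_evenBlocks 1 2),
    integral_indicator_evenBlocks_zero_one, integral_indicator_evenBlocks_one_two, add_zero]

theorem integral_indicator_evenBlocks_le_length {a b : ℝ} (hab : a ≤ b) :
    ∫ x in a..b, evenBlocks.indicator (1 : ℝ → ℝ) x ≤ b - a := by
  calc ∫ x in a..b, evenBlocks.indicator (1 : ℝ → ℝ) x ≤ ∫ _ in a..b, (1 : ℝ) :=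
        intervalIntegral.integral_mono_on hab (intervalIntegrable_indicator_evenBlocks a b)
          intervalIntegrable_const fun x _ => indicator_le_self' (fun _ _ => zero_le_one) x
    _ = b - a := by simp

theorem integral_indicator_evenBlocks_add_three_le (a : ℝ) :
    ∫ x in a..a + 3, evenBlocks.indicator (1 : ℝ → ℝ) x ≤ 2 := by
  rw [← intervalIntegral.integral_add_adjacent_intervals
      (intervalIntegrable_indicator_evenBlocks a (a + 2))
      (intervalIntegrable_indicator_evenBlocks _ (a + 3)),
    integral_indicator_evenBlocks_add_two]
  linarith [integral_indicator_evenBlocks_le_length (by linarith : a + 2 ≤ a + 3)]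

theorem integral_indicator_evenBlocks_zero_three :
    ∫ x in (0 : ℝ)..3, evenBlocks.indicator (1 : ℝ → ℝ) x = 2 := by
  rw [← intervalIntegral.integral_add_adjacent_intervals
      (intervalIntegrable_indicator_evenBlocks 0 1) (intervalIntegrable_indicator_evenBlocks 1 3),
    integral_indicator_evenBlocks_zero_one, show (3 : ℝ) = 1 + 2 by norm_num,
    integral_indicator_evenBlocks_add_two]
  norm_num

theorem stmt0_general {Ω : Type*} [MeasurableSpace Ω] (P : Measure Ω)
    (X : Ω → ℝ) (hX : Measurable X)
    (hunif : P.map X = (2 : ENNReal)⁻¹ • (volume.restrict (Icc (0 : ℝ) 2)))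
    (f : ℝ → ℝ)
    (hf : f = Set.indicator {x : ℝ | ∃ k : ℤ, (2 * k : ℝ) ≤ x ∧ x ≤ 2 * k + 1}
      (fun _ => (1 : ℝ))) :
    (⨆ a : ℝ, ∫ ω, f (a + X ω) ∂P) = 1 / 2 ∧
    (⨆ a : ℝ, ∫ ω, f (a + (3 / 2) * X ω) ∂P) = 2 / 3 ∧
    ¬ AntitoneOn (fun d : ℝ => ⨆ a : ℝ, ∫ ω, f (a + d * X ω) ∂P) (Ioi 0) := by
  replace hf : f = evenBlocks.indicator (1 : ℝ → ℝ) := hf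
  have hexp (a d : ℝ) (hd : d ≠ 0) :
      ∫ ω, f (a + d * X ω) ∂P = (2 * d)⁻¹ * ∫ y in a..a + 2 * d, f y :=
    integral_comp_affine_of_map_eq_uniform hX two_pos (by rw [hunif, ENNReal.ofReal_ofNat])
      (hf ▸ measurable_const.indicator measurableSet_evenBlocks) a hd
  have hexp₁ (a : ℝ) : ∫ ω, f (a + 1 * X ω) ∂P = 1 / 2 := by
    rw [hexp a 1 one_ne_zero, mul_one, hf, integral_indicator_evenBlocks_add_two]
    norm_num
  have hexp₃₂ (a : ℝ) :
      ∫ ω, f (a + 3 / 2 * X ω) ∂P = 3⁻¹ * ∫ y in a..a + 3, f y := by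
    rw [hexp a _ (by norm_num)]
    norm_num
  have hsup₁ : (⨆ a : ℝ, ∫ ω, f (a + 1 * X ω) ∂P) = 1 / 2 := by
    simp only [hexp₁, ciSup_const]
  have hsup₃₂ : (⨆ a : ℝ, ∫ ω, f (a + 3 / 2 * X ω) ∂P) = 2 / 3 := by
    refine ciSup_eq_of_forall_le_of_forall_lt_exists_gt (fun a => ?_) fun w hw => ⟨0, ?_⟩
    · linarith [hexp₃₂ a, hf ▸ integral_indicator_evenBlocks_add_three_le a]
    · rw [hexp₃₂, zero_add, hf, integral_indicator_evenBlocks_zero_three]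
      linarith
  refine ⟨by simpa only [one_mul] using hsup₁, hsup₃₂, fun hanti => ?_⟩
  have := hanti (mem_Ioi.2 one_pos) (mem_Ioi.2 (by norm_num : (0 : ℝ) < 3 / 2)) (by norm_num)
  simp only [hsup₁, hsup₃₂] at this
  norm_num at this

/-- If `X` is uniform on `[0,2]` and `f` is `1` on the intervals `[2k, 2k+1]`
(`k ∈ ℤ`) and `0` elsewhere, then `sup_a E f(a + X) = 1/2` while
`sup_a E f(a + (3/2) X) = 2/3`; in particular `g_{X,f}` is not decreasing on `(0,∞)`. -/
theorem stmt0 {Ω : Type*} [MeasurableSpace Ω] (P : Measure Ω) [IsProbabilityMeasure P]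
    (X : Ω → ℝ) (hX : Measurable X)
    (hunif : P.map X = (2 : ENNReal)⁻¹ • (volume.restrict (Icc (0 : ℝ) 2)))
    (f : ℝ → ℝ)
    (hf : f = Set.indicator {x : ℝ | ∃ k : ℤ, (2 * k : ℝ) ≤ x ∧ x ≤ 2 * k + 1}
      (fun _ => (1 : ℝ))) :
    (⨆ a : ℝ, ∫ ω, f (a + X ω) ∂P) = 1 / 2 ∧
    (⨆ a : ℝ, ∫ ω, f (a + (3 / 2) * X ω) ∂P) = 2 / 3 ∧
    ¬ AntitoneOn (fun d : ℝ => ⨆ a : ℝ, ∫ ω, f (a + d * X ω) ∂P) (Ioi 0) :=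
  stmt0_general P X hX hunif f hf
end

section
/- Let X be a real random variable with characteristic function φ_X. The pair (X, cos) is reasonable (i.e., d ↦ sup_a E[cos(a + dX)] is decreasing on (0,∞)) if and only if t ↦ |φ_X(t)| is decreasing on [0,∞). -/
open MeasureTheory Set

/-! Since `E[cos(a + dX)] = Re(e^{ia} φ_X(d))`, the supremum over the phase `a` is `|φ_X(d)|`,
attained at `a = -arg φ_X(d)`. So the two functions agree on `(0,∞)`, and adding the endpoint `0`
changes nothing because `|φ_X| ≤ 1 = |φ_X(0)|`. -/

open Complex in
theorem Complex.iSup_re_exp_ofReal_mul_I_mul (z : ℂ) :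
    ⨆ a : ℝ, (exp (a * I) * z).re = ‖z‖ := by
  have hle : ∀ a : ℝ, (exp (a * I) * z).re ≤ ‖z‖ := fun a =>
    (re_le_norm _).trans (by rw [norm_mul, norm_exp_ofReal_mul_I, one_mul])
  have hattained : exp ((-z.arg : ℝ) * I) * z = ‖z‖ :=
    calc exp ((-z.arg : ℝ) * I) * z = exp ((-z.arg : ℝ) * I) * (‖z‖ * exp (z.arg * I)) := by
          rw [norm_mul_exp_arg_mul_I]
      _ = ‖z‖ := by
          rw [mul_left_comm, ← exp_add, ofReal_neg, neg_mul, neg_add_cancel, exp_zero, mul_one]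
  refine le_antisymm (ciSup_le hle) ?_
  calc ‖z‖ = (exp ((-z.arg : ℝ) * I) * z).re := by rw [hattained, ofReal_re]
    _ ≤ ⨆ a : ℝ, (exp (a * I) * z).re := le_ciSup ⟨‖z‖, forall_mem_range.2 hle⟩ _

theorem antitoneOn_Ici_iff_antitoneOn_Ioi {α β : Type*} [LinearOrder α] [Preorder β] {f : α → β}
    {a : α} (hmax : ∀ t, a < t → f t ≤ f a) : AntitoneOn f (Ici a) ↔ AntitoneOn f (Ioi a) := by
  refine ⟨fun hf => hf.mono Ioi_subset_Ici_self, fun hf s hs t ht hst => ?_⟩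
  rcases (mem_Ici.1 hs).eq_or_lt with rfl | has
  · rcases (mem_Ici.1 ht).eq_or_lt with rfl | hat
    · exact le_rfl
    · exact hmax t hat
  · exact hf has (has.trans_le hst) hst

open Complex in
theorem integral_cos_add_mul_eq_re_charFun {μ : Measure ℝ} [IsFiniteMeasure μ] (a d : ℝ) :
    ∫ x, Real.cos (a + d * x) ∂μ = (exp (a * I) * charFun μ d).re := by
  have hint : Integrable (fun x : ℝ => exp ((a + d * x : ℝ) * I)) μ :=
    .of_bound (by fun_prop) 1 (.of_forall fun x => (norm_exp_ofReal_mul_I _).le)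
  rw [charFun_apply_real, ← integral_const_mul]
  have hrot : ∀ x : ℝ, exp (a * I) * exp (d * x * I) = exp ((a + d * x : ℝ) * I) := fun x => by
    rw [← exp_add]; push_cast; ring_nf
  simp_rw [hrot, ← exp_ofReal_mul_I_re]
  exact integral_re hint

theorem integral_exp_I_mul_eq_charFun_map {Ω : Type*} [MeasurableSpace Ω] {P : Measure Ω}
    {X : Ω → ℝ} (hX : Measurable X) (t : ℝ) :
    ∫ ω, Complex.exp (Complex.I * (t * X ω)) ∂P = charFun (P.map X) t := by
  rw [charFun_apply_real, integral_map hX.aemeasurable (by fun_prop)]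
  simp_rw [mul_comm Complex.I]

theorem iSup_integral_cos_add_mul_eq_norm_charFun {μ : Measure ℝ} [IsFiniteMeasure μ] (d : ℝ) :
    ⨆ a : ℝ, ∫ x, Real.cos (a + d * x) ∂μ = ‖charFun μ d‖ := by
  simp_rw [integral_cos_add_mul_eq_re_charFun]
  exact Complex.iSup_re_exp_ofReal_mul_I_mul _

/-- For a real random variable `X` with characteristic function `φ_X`, the pair
`(X, cos)` is reasonable (i.e. `d ↦ sup_a E[cos(a + dX)]` is decreasing on `(0,∞)`) iff
`t ↦ |φ_X(t)|` is decreasing on `[0,∞)`. -/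
theorem stmt8 {Ω : Type*} [MeasurableSpace Ω] (P : Measure Ω) [IsProbabilityMeasure P]
    (X : Ω → ℝ) (hX : Measurable X)
    (φ : ℝ → ℂ) (hφ : ∀ t : ℝ, φ t = ∫ ω, Complex.exp (Complex.I * (t * X ω)) ∂P) :
    AntitoneOn (fun d : ℝ => ⨆ a : ℝ, ∫ ω, Real.cos (a + d * X ω) ∂P) (Ioi 0) ↔
      AntitoneOn (fun t : ℝ => ‖φ t‖) (Ici 0) := by
  have : IsProbabilityMeasure (P.map X) := Measure.isProbabilityMeasure_map hX.aemeasurable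
  have hφ_eq : φ = charFun (P.map X) :=
    funext fun t => (hφ t).trans (integral_exp_I_mul_eq_charFun_map hX t)
  have hsup (d : ℝ) : ⨆ a : ℝ, ∫ ω, Real.cos (a + d * X ω) ∂P = ‖charFun (P.map X) d‖ := by
    rw [← iSup_integral_cos_add_mul_eq_norm_charFun]
    exact iSup_congr fun a =>
      (integral_map (f := fun x => Real.cos (a + d * x)) hX.aemeasurable (by fun_prop)).symm
  simp_rw [hsup, hφ_eq]
  refine (antitoneOn_Ici_iff_antitoneOn_Ioi fun t _ => ?_).symm
  simpa using norm_charFun_le_one t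
end

section
/- Let μ be a finite measure on ℝⁿ with no atoms. Then sup_{x ∈ ℝⁿ} μ({y : ‖x − y‖ < δ}) → 0 as δ → 0. -/
/-!
Outside a compact set `K` the measure is already small, and near each point of `K` it is small
because balls shrink to a null singleton. A Lebesgue number of the resulting cover of `K` by
small-measure balls is a radius that works uniformly in the center.
-/

open MeasureTheory Set Filter Metric Topology

section MetricSpace

variable {X : Type*} [MetricSpace X] [MeasurableSpace X] [OpensMeasurableSpace X]
  {μ : Measure X} [IsFiniteMeasure μ] [NullSingletonClass μ]

theorem tendsto_measure_ball_nhdsGT_zero (z : X) :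
    Tendsto (fun r : ℝ => μ (ball z r)) (𝓝[>] 0) (𝓝 0) := by
  simpa only [thickening_singleton, measure_singleton] using
    tendsto_measure_thickening_of_isClosed (μ := μ) ⟨1, one_pos, measure_ne_top μ _⟩
      (isClosed_singleton (x := z))

theorem exists_pos_forall_measure_ball_le (hμ : IsTightMeasureSet {μ}) {ε : ENNReal}
    (hε : 0 < ε) : ∃ δ > 0, ∀ x : X, μ (ball x δ) ≤ ε := by
  obtain ⟨K, hK, hKμ⟩ :=
    isTightMeasureSet_iff_exists_isCompact_measure_compl_le.1 hμ ε hε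
  have hKc : μ Kᶜ ≤ ε := hKμ μ rfl
  have hsmall : ∀ z : X, ∃ r > 0, μ (ball z r) ≤ ε := fun z =>
    (((tendsto_measure_ball_nhdsGT_zero z).eventually_le_const hε).and
      self_mem_nhdsWithin).exists.imp fun _ h => ⟨h.2, h.1⟩
  choose r hr_pos hr using hsmall
  obtain ⟨δ, hδ, hcover⟩ := lebesgue_number_lemma_of_metric hK (fun z => isOpen_ball)
    fun z _ => mem_iUnion.2 ⟨z, mem_ball_self (hr_pos z)⟩
  refine ⟨δ / 2, half_pos hδ, fun x => ?_⟩
  by_cases hmeet : (ball x (δ / 2) ∩ K).Nonempty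
  · obtain ⟨y, hxy, hyK⟩ := hmeet
    obtain ⟨z, hyz⟩ := hcover y hyK
    have hxy : ball x (δ / 2) ⊆ ball y δ :=
      ball_subset_ball' (by linarith [mem_ball'.1 hxy])
    exact (measure_mono (hxy.trans hyz)).trans (hr z)
  · have hdisj : Disjoint (ball x (δ / 2)) K :=
      disjoint_iff_inter_eq_empty.2 (not_nonempty_iff_eq_empty.1 hmeet)
    exact (measure_mono hdisj.subset_compl_right).trans hKc

theorem tendsto_iSup_measure_ball_nhdsGT_zero (hμ : IsTightMeasureSet {μ}) :
    Tendsto (fun δ : ℝ => ⨆ x : X, μ (ball x δ)) (𝓝[>] 0) (𝓝 0) := by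
  refine ENNReal.tendsto_nhds_zero.2 fun ε hε => ?_
  obtain ⟨δ, hδ, hball⟩ := exists_pos_forall_measure_ball_le hμ hε
  filter_upwards [Ioo_mem_nhdsGT hδ] with t ht
  exact iSup_le fun x => (measure_mono (ball_subset_ball ht.2.le)).trans (hball x)

end MetricSpace

/-- For a finite Borel measure `μ` on `ℝⁿ` with no atoms,
`sup_x μ({y : ‖x − y‖ < δ}) → 0` as `δ → 0⁺`. -/
theorem stmt14 {n : ℕ} (μ : Measure (EuclideanSpace ℝ (Fin n)))
    [IsFiniteMeasure μ] [NullSingletonClass μ] :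
    Tendsto (fun δ : ℝ => ⨆ x : EuclideanSpace ℝ (Fin n),
        μ {y : EuclideanSpace ℝ (Fin n) | ‖x - y‖ < δ})
      (nhdsWithin 0 (Ioi 0)) (nhds 0) := by
  have hball : ∀ (x : EuclideanSpace ℝ (Fin n)) (δ : ℝ),
      {y | ‖x - y‖ < δ} = ball x δ := fun x δ => by
    ext y
    rw [mem_ball, dist_eq_norm, norm_sub_rev]
    rfl
  simp only [hball]
  exact tendsto_iSup_measure_ball_nhdsGT_zero isTightMeasureSet_singleton
end

section
/- Let X be a dart in ℝⁿ and f a bounded payoff function such that (X,f) is not reasonable. Then there exists a bounded nonnegative payoff function f' with compact support such that (X,f') is not reasonable; moreover f' can be chosen continuous if f is continuous. -/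
open MeasureTheory Set Filter Topology

/-- If `X` is a dart in `ℝⁿ` and `f` a bounded payoff function such that
`(X, f)` is not reasonable, then there is a bounded nonnegative payoff function `f'` with
compact support such that `(X, f')` is not reasonable; moreover `f'` can be chosen continuous
whenever `f` is continuous. -/
theorem stmt15 {n : ℕ} {Ω : Type*} [MeasurableSpace Ω] (P : Measure Ω) [IsProbabilityMeasure P]
    (X : Ω → (Fin n → ℝ)) (hX : Measurable X)
    (f : (Fin n → ℝ) → ℝ) (hf : Measurable f) (hbdd : ∃ C : ℝ, ∀ x, |f x| ≤ C)
    (hnotreas :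
      ¬ AntitoneOn (fun d : ℝ => ⨆ a : Fin n → ℝ, ∫ ω, f (a + d • X ω) ∂P) (Ioi 0)) :
    ∃ f' : (Fin n → ℝ) → ℝ,
      Measurable f' ∧ (∀ x, 0 ≤ f' x) ∧ (∃ C : ℝ, ∀ x, |f' x| ≤ C) ∧
      HasCompactSupport f' ∧
      (Continuous f → Continuous f') ∧
      ¬ AntitoneOn (fun d : ℝ => ⨆ a : Fin n → ℝ, ∫ ω, f' (a + d • X ω) ∂P) (Ioi 0) := by
  classical
  obtain ⟨C, hC⟩ := hbdd
  have hC0 : 0 ≤ C := le_trans (abs_nonneg _) (hC 0)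
  -- integrability of bounded measurable compositions
  have key : ∀ (h : (Fin n → ℝ) → ℝ) (M : ℝ), Measurable h → (∀ x, |h x| ≤ M) →
      ∀ (a : Fin n → ℝ) (d : ℝ), Integrable (fun ω => h (a + d • X ω)) P := by
    intro h M hm hb a d
    have hmeas : Measurable fun ω => h (a + d • X ω) := by
      apply hm.comp
      exact measurable_const.add (hX.const_smul d)
    exact (integrable_const M).mono' hmeas.aestronglyMeasurable
      (Filter.Eventually.of_forall fun ω => by
        simpa [Real.norm_eq_abs] using hb (a + d • X ω))
  -- bounds on all the integrals of f
  have hintle : ∀ (a : Fin n → ℝ) (d : ℝ), (∫ ω, f (a + d • X ω) ∂P) ≤ C := by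
    intro a d
    calc (∫ ω, f (a + d • X ω) ∂P) ≤ ∫ _ω, C ∂P :=
          integral_mono (key f C hf hC a d) (integrable_const C)
            (fun ω => (abs_le.mp (hC _)).2)
      _ = C := by simp
  have hbddAbove : ∀ d : ℝ, BddAbove (Set.range fun a : Fin n → ℝ =>
      ∫ ω, f (a + d • X ω) ∂P) := by
    intro d
    exact ⟨C, by rintro _ ⟨a, rfl⟩; exact hintle a d⟩
  -- extract the order violation
  rw [AntitoneOn] at hnotreas
  push_neg at hnotreas
  obtain ⟨d1, hd1, d2, hd2, hle, hlt⟩ := hnotreas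
  set g : ℝ → ℝ := fun d => ⨆ a : Fin n → ℝ, ∫ ω, f (a + d • X ω) ∂P with hg
  obtain ⟨a0, ha0⟩ := exists_lt_of_lt_ciSup hlt
  -- the truncated functions
  set F : ℕ → Ω → ℝ := fun k ω =>
    (f (a0 + d2 • X ω) + C) * max 0 (min 1 (((k : ℝ) + 1) - ‖a0 + d2 • X ω‖)) with hF
  -- pointwise convergence
  have hpt : ∀ ω, Tendsto (fun k : ℕ => F k ω) atTop (𝓝 (f (a0 + d2 • X ω) + C)) := by
    intro ω
    apply tendsto_const_nhds.congr'
    filter_upwards [eventually_ge_atTop ⌈‖a0 + d2 • X ω‖⌉₊] with k hk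
    have h1 : ‖a0 + d2 • X ω‖ ≤ (k : ℝ) := le_trans (Nat.le_ceil _) (Nat.cast_le.mpr hk)
    have h2 : (1 : ℝ) ≤ ((k : ℝ) + 1) - ‖a0 + d2 • X ω‖ := by linarith
    simp [hF, min_eq_left h2]
  -- dominated convergence
  have hφle1 : ∀ (t : ℝ), max 0 (min 1 t) ≤ 1 := fun t => max_le zero_le_one (min_le_left _ _)
  have hφ0 : ∀ (t : ℝ), 0 ≤ max 0 (min 1 t) := fun t => le_max_left _ _
  have hFbound : ∀ (k : ℕ) (ω : Ω), |F k ω| ≤ 2 * C := by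
    intro k ω
    have h1 : 0 ≤ f (a0 + d2 • X ω) + C := by linarith [(abs_le.mp (hC (a0 + d2 • X ω))).1]
    have h2 : f (a0 + d2 • X ω) + C ≤ 2 * C := by
      linarith [(abs_le.mp (hC (a0 + d2 • X ω))).2]
    rw [abs_of_nonneg (mul_nonneg h1 (hφ0 _))]
    calc F k ω ≤ (f (a0 + d2 • X ω) + C) * 1 :=
          mul_le_mul_of_nonneg_left (hφle1 _) h1
      _ ≤ 2 * C := by linarith
  have hFmeas : ∀ k : ℕ, AEStronglyMeasurable (F k) P := by
    intro k
    have : Measurable (F k) := by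
      apply ((hf.comp (measurable_const.add (hX.const_smul d2))).add measurable_const).mul
      exact measurable_const.max (measurable_const.min
        (measurable_const.sub ((measurable_norm).comp (measurable_const.add (hX.const_smul d2)))))
    exact this.aestronglyMeasurable
  have hDCT : Tendsto (fun k : ℕ => ∫ ω, F k ω ∂P) atTop
      (𝓝 (∫ ω, (f (a0 + d2 • X ω) + C) ∂P)) := by
    apply tendsto_integral_of_dominated_convergence (fun _ => 2 * C) hFmeas
      (integrable_const (2 * C))
    · intro k
      exact Filter.Eventually.of_forall fun ω => by
        simpa [Real.norm_eq_abs] using hFbound k ω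
    · exact Filter.Eventually.of_forall hpt
  have hlimit : (∫ ω, (f (a0 + d2 • X ω) + C) ∂P) = (∫ ω, f (a0 + d2 • X ω) ∂P) + C := by
    rw [integral_add (key f C hf hC a0 d2) (integrable_const C)]
    simp
  have hgt : g d1 + C < ∫ ω, (f (a0 + d2 • X ω) + C) ∂P := by
    rw [hlimit]; linarith
  obtain ⟨k, hk⟩ := (hDCT.eventually (eventually_gt_nhds hgt)).exists
  -- the final function
  set R : ℝ := (k : ℝ) + 1 with hR
  set f' : (Fin n → ℝ) → ℝ := fun x => (f x + C) * max 0 (min 1 (R - ‖x‖)) with hf'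
  have hf'nonneg : ∀ x, 0 ≤ f' x := by
    intro x
    exact mul_nonneg (by linarith [(abs_le.mp (hC x)).1]) (hφ0 _)
  have hf'le : ∀ x, f' x ≤ f x + C := by
    intro x
    calc f' x ≤ (f x + C) * 1 :=
        mul_le_mul_of_nonneg_left (hφle1 _) (by linarith [(abs_le.mp (hC x)).1])
      _ = f x + C := mul_one _
  have hf'bound : ∀ x, |f' x| ≤ 2 * C := by
    intro x
    rw [abs_of_nonneg (hf'nonneg x)]
    have := hf'le x
    linarith [(abs_le.mp (hC x)).2]
  have hf'meas : Measurable f' := by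
    apply (hf.add measurable_const).mul
    exact measurable_const.max (measurable_const.min (measurable_const.sub measurable_norm))
  -- F k ω = f' (a0 + d2 • X ω)
  have hFk : ∀ ω, F k ω = f' (a0 + d2 • X ω) := fun ω => rfl
  refine ⟨f', hf'meas, hf'nonneg, ⟨2 * C, hf'bound⟩, ?_, ?_, ?_⟩
  · -- compact support
    apply HasCompactSupport.intro (isCompact_closedBall (0 : Fin n → ℝ) R)
    intro x hx
    have hxR : R < ‖x‖ := by
      simpa [Metric.mem_closedBall, dist_zero_right, not_le] using hx
    have : max 0 (min 1 (R - ‖x‖)) = 0 :=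
      max_eq_left (le_trans (min_le_right _ _) (by linarith))
    simp [hf', this]
  · -- continuity
    intro hcont
    exact (hcont.add continuous_const).mul
      (continuous_const.max (continuous_const.min (continuous_const.sub continuous_norm)))
  · -- not reasonable
    intro hA
    have h1 : (⨆ a : Fin n → ℝ, ∫ ω, f' (a + d1 • X ω) ∂P) ≤ g d1 + C := by
      apply ciSup_le
      intro a
      calc (∫ ω, f' (a + d1 • X ω) ∂P) ≤ ∫ ω, (f (a + d1 • X ω) + C) ∂P :=
            integral_mono (key f' (2 * C) hf'meas hf'bound a d1)
              ((key f C hf hC a d1).add (integrable_const C)) (fun ω => hf'le _)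
        _ = (∫ ω, f (a + d1 • X ω) ∂P) + C := by
            rw [integral_add (key f C hf hC a d1) (integrable_const C)]; simp
        _ ≤ g d1 + C := by
            have := le_ciSup (hbddAbove d1) a
            simpa [hg] using add_le_add_right this C
    have h2 : g d1 + C < ⨆ a : Fin n → ℝ, ∫ ω, f' (a + d2 • X ω) ∂P := by
      have hbdd' : BddAbove (Set.range fun a : Fin n → ℝ => ∫ ω, f' (a + d2 • X ω) ∂P) := by
        refine ⟨2 * C, ?_⟩
        rintro _ ⟨a, rfl⟩
        calc (∫ ω, f' (a + d2 • X ω) ∂P) ≤ ∫ _ω, 2 * C ∂P :=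
              integral_mono (key f' (2 * C) hf'meas hf'bound a d2) (integrable_const _)
                (fun ω => (abs_le.mp (hf'bound _)).2)
          _ = 2 * C := by simp
      calc g d1 + C < ∫ ω, F k ω ∂P := hk
        _ = ∫ ω, f' (a0 + d2 • X ω) ∂P := by simp only [hFk]
        _ ≤ _ := le_ciSup hbdd' a0
    have := hA hd1 hd2 hle
    simp only at this
    exact absurd this (not_le.mpr (lt_of_le_of_lt h1 h2))
end

section
/- Let X_j be a sequence of random vectors in ℝⁿ converging in total variation to X. Then for every bounded continuous f and every d > 0, sup_a E f(a + dX_j) → sup_a E f(a + dX). Consequently, if each (X_j, f) is reasonable then (X, f) is reasonable. -/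
/-!
Closeness in total variation controls the integrals of bounded measurable functions: by the
layer cake formula, `∫ g dμ - ∫ g dν` is an average over levels `t` of `μ {t ≤ g} - ν {t ≤ g}`
(applied to the positive and negative parts of `g`). Hence `E f(a + dX_j) → E f(a + dX)`
uniformly in `a`, uniform convergence passes to suprema, and antitonicity passes to pointwise
limits.
-/

open MeasureTheory Set Filter Topology

section Supremum

variable {κ : Type*} {F G : κ → ℝ} {ε : ℝ}

lemma ciSup_le_ciSup_add [Nonempty κ] (hG : BddAbove (range G)) (h : ∀ a, F a ≤ G a + ε) :
    ⨆ a, F a ≤ (⨆ a, G a) + ε :=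
  ciSup_le fun a => (h a).trans (add_le_add_left (le_ciSup hG a) ε)

lemma bddAbove_range_of_le_add (hG : BddAbove (range G)) (h : ∀ a, F a ≤ G a + ε) :
    BddAbove (range F) := by
  obtain ⟨M, hM⟩ := hG
  exact ⟨M + ε, forall_mem_range.2 fun a => (h a).trans (by gcongr; exact hM (mem_range_self a))⟩

lemma abs_ciSup_sub_ciSup_le [Nonempty κ] (hG : BddAbove (range G)) (h : ∀ a, |F a - G a| ≤ ε) :
    |(⨆ a, F a) - ⨆ a, G a| ≤ ε := by
  have hFG : ∀ a, F a ≤ G a + ε := fun a => by linarith [(abs_le.1 (h a)).2]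
  have hGF : ∀ a, G a ≤ F a + ε := fun a => by linarith [(abs_le.1 (h a)).1]
  have hF := bddAbove_range_of_le_add hG hFG
  rw [abs_sub_le_iff]
  constructor <;> linarith [ciSup_le_ciSup_add hG hFG, ciSup_le_ciSup_add hF hGF]

lemma TendstoUniformly.tendsto_ciSup [Nonempty κ] {ι : Type*} {l : Filter ι} {F : ι → κ → ℝ}
    (hF : TendstoUniformly F G l) (hG : BddAbove (range G)) :
    Tendsto (fun i => ⨆ a, F i a) l (𝓝 (⨆ a, G a)) := by
  refine Metric.tendsto_nhds.2 fun ε hε => ?_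
  filter_upwards [Metric.tendstoUniformly_iff.1 hF (ε / 2) (half_pos hε)] with i hi
  rw [Real.dist_eq]
  refine (abs_ciSup_sub_ciSup_le hG fun a => ?_).trans_lt (half_lt_self hε)
  rw [← Real.dist_eq, dist_comm]
  exact (hi a).le

end Supremum

section TotalVariation

variable {α : Type*} [MeasurableSpace α] {μ ν : Measure α} [IsFiniteMeasure μ] [IsFiniteMeasure ν]
  {g : α → ℝ} {ε : ℝ}

lemma abs_integral_sub_integral_le_of_nonneg_of_le (hg : Measurable g) (hg0 : 0 ≤ g) {M : ℝ}
    (hM : 0 ≤ M) (hgM : ∀ x, g x ≤ M)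
    (h : ∀ A, MeasurableSet A → |μ.real A - ν.real A| ≤ ε) :
    |∫ x, g x ∂μ - ∫ x, g x ∂ν| ≤ M * ε := by
  have hint : ∀ (ρ : Measure α) [IsFiniteMeasure ρ], Integrable g ρ := fun ρ _ =>
    Integrable.of_bound hg.aestronglyMeasurable M (Eventually.of_forall fun x => by
      rw [Real.norm_eq_abs, abs_of_nonneg (hg0 x)]; exact hgM x)
  have hlayer : ∀ (ρ : Measure α) [IsFiniteMeasure ρ],
      ∫ x, g x ∂ρ = ∫ t in Ioc 0 M, ρ.real {x | t ≤ g x} := fun ρ _ =>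
    (hint ρ).integral_eq_integral_Ioc_meas_le (Eventually.of_forall hg0) (Eventually.of_forall hgM)
  have hlevel : ∀ (ρ : Measure α) [IsFiniteMeasure ρ],
      IntegrableOn (fun t => ρ.real {x | t ≤ g x}) (Ioc 0 M) := by
    intro ρ _
    have hanti : Antitone fun t => ρ.real {x | t ≤ g x} := fun s t hst =>
      measureReal_mono fun x hx => hst.trans hx
    exact ((hanti.antitoneOn _).integrableOn_isCompact isCompact_Icc).mono_set Ioc_subset_Icc_self
  rw [hlayer μ, hlayer ν, ← integral_sub (hlevel μ) (hlevel ν), ← Real.norm_eq_abs]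
  calc ‖∫ t in Ioc 0 M, (μ.real {x | t ≤ g x} - ν.real {x | t ≤ g x})‖
      ≤ ε * volume.real (Ioc 0 M) :=
        norm_setIntegral_le_of_norm_le_const measure_Ioc_lt_top fun t _ =>
          h _ (hg measurableSet_Ici)
    _ = M * ε := by rw [Real.volume_real_Ioc_of_le hM, sub_zero, mul_comm]

lemma abs_integral_sub_integral_le_of_abs_le (hg : Measurable g) {C : ℝ} (hC0 : 0 ≤ C)
    (hC : ∀ x, |g x| ≤ C) (h : ∀ A, MeasurableSet A → |μ.real A - ν.real A| ≤ ε) :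
    |∫ x, g x ∂μ - ∫ x, g x ∂ν| ≤ 2 * C * ε := by
  have hint : ∀ (ρ : Measure α) [IsFiniteMeasure ρ], Integrable g ρ := fun ρ _ =>
    Integrable.of_bound hg.aestronglyMeasurable C (Eventually.of_forall hC)
  have hpos := abs_integral_sub_integral_le_of_nonneg_of_le (μ := μ) (ν := ν)
    (g := fun x => ((g x).toNNReal : ℝ)) (by fun_prop) (fun x => NNReal.coe_nonneg _) hC0
    (fun x => by simpa [hC0] using (le_abs_self _).trans (hC x)) h
  have hneg := abs_integral_sub_integral_le_of_nonneg_of_le (μ := μ) (ν := ν)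
    (g := fun x => ((-g x).toNNReal : ℝ)) (by fun_prop) (fun x => NNReal.coe_nonneg _) hC0
    (fun x => by simpa [hC0] using (neg_le_abs _).trans (hC x)) h
  rw [integral_eq_integral_pos_part_sub_integral_neg_part (hint μ),
    integral_eq_integral_pos_part_sub_integral_neg_part (hint ν), abs_le]
  rw [abs_le] at hpos hneg
  constructor <;> linarith [hpos.1, hpos.2, hneg.1, hneg.2]

lemma tendstoUniformly_integral_of_tendsto_tv {ι κ : Type*} {l : Filter ι} {μ : ι → Measure α}
    [∀ i, IsFiniteMeasure (μ i)]
    (htv : ∀ ε > 0, ∀ᶠ i in l, ∀ A, MeasurableSet A → |(μ i).real A - ν.real A| < ε)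
    {g : κ → α → ℝ} (hg : ∀ a, Measurable (g a)) {C : ℝ} (hC0 : 0 ≤ C)
    (hC : ∀ a x, |g a x| ≤ C) :
    TendstoUniformly (fun i a => ∫ x, g a x ∂μ i) (fun a => ∫ x, g a x ∂ν) l := by
  refine Metric.tendstoUniformly_iff.2 fun ε hε => ?_
  have hδ : 0 < ε / (2 * C + 1) := by positivity
  filter_upwards [htv _ hδ] with i hi a
  rw [Real.dist_eq, abs_sub_comm]
  calc |∫ x, g a x ∂μ i - ∫ x, g a x ∂ν| ≤ 2 * C * (ε / (2 * C + 1)) :=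
        abs_integral_sub_integral_le_of_abs_le (hg a) hC0 (hC a) fun A hA => (hi A hA).le
    _ < ε := by
        rw [mul_div_assoc', div_lt_iff₀ (by positivity)]
        nlinarith

end TotalVariation

/-- If random vectors `X_j` converge in total variation to `X`, then for every
bounded continuous `f` and every `d > 0`, `sup_a E f(a + dX_j) → sup_a E f(a + dX)`;
consequently, if each `(X_j, f)` is reasonable then `(X, f)` is reasonable. -/
theorem stmt18 {n : ℕ} {Ω : Type*} [MeasurableSpace Ω] (P : Measure Ω) [IsProbabilityMeasure P]
    (X : ℕ → Ω → (Fin n → ℝ)) (hX : ∀ j, Measurable (X j))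
    (Xlim : Ω → (Fin n → ℝ)) (hXlim : Measurable Xlim)
    (htv : ∀ ε : ℝ, 0 < ε → ∃ N : ℕ, ∀ j ≥ N, ∀ A : Set (Fin n → ℝ), MeasurableSet A →
      |((P.map (X j)) A).toReal - ((P.map Xlim) A).toReal| < ε)
    (f : (Fin n → ℝ) → ℝ) (hf : Continuous f) (hbdd : ∃ C : ℝ, ∀ x, |f x| ≤ C) :
    (∀ d : ℝ, 0 < d →
      Tendsto (fun j : ℕ => ⨆ a : Fin n → ℝ, ∫ ω, f (a + d • X j ω) ∂P) atTop
        (nhds (⨆ a : Fin n → ℝ, ∫ ω, f (a + d • Xlim ω) ∂P))) ∧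
    ((∀ j, AntitoneOn (fun d : ℝ => ⨆ a : Fin n → ℝ, ∫ ω, f (a + d • X j ω) ∂P) (Ioi 0)) →
      AntitoneOn (fun d : ℝ => ⨆ a : Fin n → ℝ, ∫ ω, f (a + d • Xlim ω) ∂P) (Ioi 0)) := by
  obtain ⟨C, hC⟩ := hbdd
  have hC0 : 0 ≤ C := (abs_nonneg _).trans (hC 0)
  have hlim : ∀ d : ℝ, 0 < d →
      Tendsto (fun j : ℕ => ⨆ a : Fin n → ℝ, ∫ ω, f (a + d • X j ω) ∂P) atTop
        (nhds (⨆ a : Fin n → ℝ, ∫ ω, f (a + d • Xlim ω) ∂P)) := by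
    intro d _
    have hfd : ∀ a, Continuous fun x : Fin n → ℝ => f (a + d • x) := fun a => by fun_prop
    have hpush : ∀ Y : Ω → (Fin n → ℝ), Measurable Y → ∀ a,
        ∫ ω, f (a + d • Y ω) ∂P = ∫ x, f (a + d • x) ∂P.map Y := fun Y hY a =>
      (integral_map hY.aemeasurable (hfd a).aestronglyMeasurable).symm
    have hbddAbove : BddAbove (range fun a => ∫ ω, f (a + d • Xlim ω) ∂P) := by
      refine ⟨C, forall_mem_range.2 fun a => ?_⟩
      have := norm_integral_le_of_norm_le_const (μ := P) (f := fun ω => f (a + d • Xlim ω))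
        (Eventually.of_forall fun ω => hC (a + d • Xlim ω))
      simp only [Real.norm_eq_abs, probReal_univ, mul_one] at this
      exact (le_abs_self _).trans this
    refine TendstoUniformly.tendsto_ciSup ?_ hbddAbove
    simp only [hpush _ (hX _), hpush Xlim hXlim]
    exact tendstoUniformly_integral_of_tendsto_tv
      (fun ε hε => eventually_atTop.2 (htv ε hε)) (fun a => (hfd a).measurable) hC0 fun a x => hC _
  exact ⟨hlim, fun hanti => antitoneOn_of_frequently_antitoneOn_of_tendsto
    (Frequently.of_forall hanti) hlim⟩
end
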